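/- Let ζ ∈ {1, −1, i, −i} ⊂ ℂ. If x is the unique Euclidean-norm minimizer over the symbol-level-precoding feasible set F(d), then ζ·x is the unique Euclidean-norm minimizer over F(ζ·d). -/
import Mathlib

open Complex

/-- The sign-aligned exceedance relation `R(a,b)`. -/
def signAligned (a b : ℝ) : Prop := (0 ≤ b ∧ b ≤ a) ∨ (b ≤ 0 ∧ a ≤ b)

/-- The symbol-level-precoding feasible set `F(d)` for channel rows `h j`,
noise level `σ`, SNR targets `γ j` and data vector `d`. -/
def slpFeasible {M K : ℕ} (h : Fin K → Fin M → ℂ) (σ : ℝ) (γ : Fin K → ℝ)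
    (d : Fin K → ℂ) : Set (EuclideanSpace ℂ (Fin M)) :=
  {x | ∀ j : Fin K,
    signAligned (∑ m, h j m * x m).re (σ * Real.sqrt (γ j) * (d j).re) ∧
    signAligned (∑ m, h j m * x m).im (σ * Real.sqrt (γ j) * (d j).im)}

lemma signAligned_neg {a b : ℝ} (hab : signAligned a b) : signAligned (-a) (-b) := by
  rcases hab with ⟨h1, h2⟩ | ⟨h1, h2⟩
  · exact Or.inr ⟨by linarith, by linarith⟩
  · exact Or.inl ⟨by linarith, by linarith⟩

lemma slp_smul_mem {M K : ℕ} (h : Fin K → Fin M → ℂ) (σ : ℝ) (γ : Fin K → ℝ)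
    (d : Fin K → ℂ) (ζ : ℂ)
    (hζ : ζ ∈ ({1, -1, Complex.I, -Complex.I} : Set ℂ))
    (z : EuclideanSpace ℂ (Fin M)) (hz : z ∈ slpFeasible h σ γ d) :
    ζ • z ∈ slpFeasible h σ γ (ζ • d) := by
  intro j
  obtain ⟨h1, h2⟩ := hz j
  have hsum : ∑ m, h j m * (ζ • z) m = ζ * ∑ m, h j m * z m := by
    simp only [PiLp.smul_apply, smul_eq_mul, Finset.mul_sum]
    exact Finset.sum_congr rfl fun m _ => by ring
  rcases hζ with rfl | rfl | rfl | rfl <;>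
    simp only [hsum, Pi.smul_apply, smul_eq_mul, Complex.mul_re, Complex.mul_im,
      Complex.one_re, Complex.one_im, Complex.neg_re, Complex.neg_im,
      Complex.I_re, Complex.I_im] <;> ring_nf <;>
    constructor <;>
    first
      | simpa using h1
      | simpa using h2
      | simpa using signAligned_neg h1
      | simpa using signAligned_neg h2

theorem stmt_3 {M K : ℕ} (h : Fin K → Fin M → ℂ) (σ : ℝ) (hσ : 0 < σ)
    (γ : Fin K → ℝ) (hγ : ∀ j, 0 < γ j) (d : Fin K → ℂ) (ζ : ℂ)
    (hζ : ζ ∈ ({1, -1, Complex.I, -Complex.I} : Set ℂ))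
    (x : EuclideanSpace ℂ (Fin M))
    (hx : x ∈ slpFeasible h σ γ d)
    (hmin : ∀ y ∈ slpFeasible h σ γ d, ‖x‖ ≤ ‖y‖)
    (huniq : ∀ y ∈ slpFeasible h σ γ d, ‖y‖ = ‖x‖ → y = x) :
    ζ • x ∈ slpFeasible h σ γ (ζ • d) ∧
      (∀ y ∈ slpFeasible h σ γ (ζ • d), ‖ζ • x‖ ≤ ‖y‖) ∧
      (∀ y ∈ slpFeasible h σ γ (ζ • d), ‖y‖ = ‖ζ • x‖ → y = ζ • x) := by
  have hnorm : ‖ζ‖ = 1 := by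
    rcases hζ with rfl | rfl | rfl | rfl <;> simp
  have hne : ζ ≠ 0 := by
    intro h0; rw [h0] at hnorm; simp at hnorm
  have hinv : ζ⁻¹ ∈ ({1, -1, Complex.I, -Complex.I} : Set ℂ) := by
    rcases hζ with rfl | rfl | rfl | rfl <;> simp [Complex.inv_I, inv_neg]
  have hinv_smul : ∀ y : EuclideanSpace ℂ (Fin M), ζ⁻¹ • ζ • y = y := by
    intro y; rw [smul_smul, inv_mul_cancel₀ hne, one_smul]
  have hinv_d : ζ⁻¹ • ζ • d = d := by
    rw [smul_smul, inv_mul_cancel₀ hne, one_smul]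
  have hback : ∀ y ∈ slpFeasible h σ γ (ζ • d), ζ⁻¹ • y ∈ slpFeasible h σ γ d := by
    intro y hy
    have := slp_smul_mem h σ γ (ζ • d) ζ⁻¹ hinv y hy
    rwa [hinv_d] at this
  have hnζ : ∀ y : EuclideanSpace ℂ (Fin M), ‖ζ • y‖ = ‖y‖ := by
    intro y; rw [norm_smul, hnorm, one_mul]
  have hnζi : ∀ y : EuclideanSpace ℂ (Fin M), ‖ζ⁻¹ • y‖ = ‖y‖ := by
    intro y; rw [norm_smul, norm_inv, hnorm]; simp
  refine ⟨slp_smul_mem h σ γ d ζ hζ x hx, ?_, ?_⟩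
  · intro y hy
    rw [hnζ]
    calc ‖x‖ ≤ ‖ζ⁻¹ • y‖ := hmin _ (hback y hy)
      _ = ‖y‖ := hnζi y
  · intro y hy hny
    have : ζ⁻¹ • y = x := by
      apply huniq _ (hback y hy)
      rw [hnζi, hny, hnζ]
    calc y = ζ • ζ⁻¹ • y := by rw [smul_smul, mul_inv_cancel₀ hne, one_smul]
      _ = ζ • x := by rw [this]
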